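/- Under the algorithmic setting and local assumptions below, define ε₁ := min{1/(2 + L_g), ε₀/2} and c := ν_min⁻¹ θ (2 + L_g)^{1+τ−δ} (1 + L_g + aL + ν̄(2 + L_g)^δ) + (L + 2aL)/(2 ν_min β) + 2. Then for every k ∈ K with x^k ∈ B_{ε₁}(x*), it holds that ‖d^k‖ ≤ c·dist(x^k, X*). -/

import Mathlib

open scoped RealInnerProductSpace
open Filter Metric

noncomputable section

/-- The convex subdifferential of `g` at `y`. -/
def subdiff {n : ℕ} (g : EuclideanSpace ℝ (Fin n) → ℝ) (y : EuclideanSpace ℝ (Fin n)) :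
    Set (EuclideanSpace ℝ (Fin n)) :=
  {v | ∀ z, g y + ⟪v, z - y⟫ ≤ g z}

/-- The proximity operator `prox_g(z)`, the (unique, for convex `g`) minimizer of
`y ↦ g y + (1/2)‖y − z‖²`. -/
noncomputable def proxPt {n : ℕ} (g : EuclideanSpace ℝ (Fin n) → ℝ)
    (z : EuclideanSpace ℝ (Fin n)) : EuclideanSpace ℝ (Fin n) :=
  Classical.epsilon fun p => ∀ y, g p + (1 / 2) * ‖p - z‖ ^ 2 ≤ g y + (1 / 2) * ‖y - z‖ ^ 2

/-- The residual (prox-gradient) mapping `r(x) = x − prox_φ(x − ∇f(x))`. -/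
noncomputable def resid {n : ℕ} (f φ : EuclideanSpace ℝ (Fin n) → ℝ)
    (x : EuclideanSpace ℝ (Fin n)) : EuclideanSpace ℝ (Fin n) :=
  x - proxPt φ (x - gradient f x)

/-- The smallest eigenvalue of a symmetric operator on ℝᵐ, as the infimum of its quadratic
form over the unit sphere. -/
noncomputable def lambdaMin {m : ℕ} (T : EuclideanSpace ℝ (Fin m) →L[ℝ] EuclideanSpace ℝ (Fin m)) :
    ℝ :=
  ⨅ u : {u : EuclideanSpace ℝ (Fin m) // ‖u‖ = 1}, ⟪T u.1, u.1⟫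

/-! Let `x̄` be a point of `X*` nearest to `xᵏ`, and let `x'` be the exact minimizer of the
strongly convex model `q̂ₖ` (modulus `μₖ`: the shift `Λₖ AᵀA` compensates the negative curvature
of `∇²ψ`). Monotonicity of `∂φ` gives `μₖ‖x̂ᵏ - x'‖ ≤ (1 + ‖Gₖ‖)‖Rₖ(x̂ᵏ)‖` and
`μₖ‖x' - x̄‖ ≤ ‖∇f(xᵏ) - ∇f(x̄) + Gₖ(x̄ - xᵏ)‖`. Near `x*` every quantity on the right is
controlled by `dist(xᵏ, X*)`: `‖r(xᵏ)‖ ≤ (2 + L_g) dist(xᵏ, X*)`, `Λₖ = O(dist)` because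
`∇²ψ(Ax̄ - b) ⪰ 0`, the Taylor remainder is `O(dist²)`, and for `k ∈ K` the error bound gives
`μₖ = νₖ‖r(xᵏ)‖^δ ≥ ν_min β dist(xᵏ, X*)`, which absorbs the quadratic terms. -/

open Set Topology

theorem ConvexOn.exists_sub_mul_le {E : Type*} [NormedAddCommGroup E] [NormedSpace ℝ E]
    [FiniteDimensional ℝ E] {φ : E → ℝ} (hφ : ConvexOn ℝ univ φ) (z : E) :
    ∃ C, ∀ y, φ z - C * (1 + ‖y - z‖) ≤ φ y := by
  obtain ⟨y₀, -, hy₀⟩ := (isCompact_closedBall z 1).exists_isMinOn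
    ⟨z, mem_closedBall_self zero_le_one⟩ ((hφ.continuousOn isOpen_univ).mono (subset_univ _))
  have hC : φ y₀ ≤ φ z := hy₀ (mem_closedBall_self zero_le_one)
  refine ⟨φ z - φ y₀, fun y => ?_⟩
  set s := ‖y - z‖
  rcases le_or_gt s 1 with hs | hs
  · have : φ y₀ ≤ φ y := hy₀ (by rwa [mem_closedBall, dist_eq_norm])
    nlinarith [norm_nonneg (y - z)]
  -- the point of the segment `[z, y]` on the unit sphere around `z` controls the slope
  have hs₀ : 0 < s := one_pos.trans hs
  have hw : φ y₀ ≤ φ ((1 - s⁻¹) • z + s⁻¹ • y) := by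
    refine hy₀ ?_
    rw [mem_closedBall, dist_eq_norm,
      show (1 - s⁻¹) • z + s⁻¹ • y - z = s⁻¹ • (y - z) by module, norm_smul,
      Real.norm_of_nonneg (inv_nonneg.2 hs₀.le), inv_mul_cancel₀ hs₀.ne']
  have hconv := hφ.2 (mem_univ z) (mem_univ y) (sub_nonneg.2 (inv_le_one_of_one_le₀ hs.le))
    (inv_nonneg.2 hs₀.le) (by ring)
  have key : s * φ y₀ ≤ (s - 1) * φ z + φ y := by
    have := mul_le_mul_of_nonneg_left (hw.trans hconv) hs₀.le
    rwa [smul_eq_mul, smul_eq_mul, mul_add, ← mul_assoc, ← mul_assoc, mul_sub, mul_one,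
      mul_inv_cancel₀ hs₀.ne', one_mul] at this
  nlinarith

theorem ConvexOn.exists_forall_add_quadratic_le {E : Type*} [NormedAddCommGroup E]
    [InnerProductSpace ℝ E] [FiniteDimensional ℝ E] {φ : E → ℝ} (hφ : ConvexOn ℝ univ φ)
    (G : E →L[ℝ] E) {c₀ : ℝ} (hc₀ : 0 < c₀) (hG : ∀ h, c₀ * ‖h‖ ^ 2 ≤ ⟪G h, h⟫) (v z : E) :
    ∃ p, ∀ y, φ p + ⟪v, p⟫ + 1 / 2 * ⟪G (p - z), p - z⟫
      ≤ φ y + ⟪v, y⟫ + 1 / 2 * ⟪G (y - z), y - z⟫ := by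
  obtain ⟨C, hC⟩ := hφ.exists_sub_mul_le z
  have hcont : Continuous fun y => φ y + ⟪v, y⟫ + 1 / 2 * ⟪G (y - z), y - z⟫ := by
    have := continuousOn_univ.1 (hφ.continuousOn isOpen_univ)
    fun_prop
  refine hcont.exists_forall_le (tendsto_atTop_mono
    (f := fun y => φ z - C + ⟪v, z⟫ + dist y z * (c₀ / 2 * dist y z - (C + ‖v‖)))
    (fun y => ?_) ?_)
  · have hv : -(‖v‖ * ‖y - z‖) ≤ ⟪v, y⟫ - ⟪v, z⟫ := by
      rw [← inner_sub_right]; exact neg_le_of_abs_le (abs_real_inner_le_norm _ _)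
    rw [dist_eq_norm]
    nlinarith [hG (y - z), hC y]
  · refine tendsto_atTop_add_const_left _ _ ?_
    refine (tendsto_dist_right_cocompact_atTop z).atTop_mul_atTop₀ ?_
    exact tendsto_atTop_add_const_right _ _
      ((tendsto_dist_right_cocompact_atTop z).const_mul_atTop (by positivity))

section Subdifferential

variable {n : ℕ} {φ : EuclideanSpace ℝ (Fin n) → ℝ}

theorem inner_sub_nonneg_of_mem_subdiff {u₁ u₂ y₁ y₂ : EuclideanSpace ℝ (Fin n)}
    (h₁ : u₁ ∈ subdiff φ y₁) (h₂ : u₂ ∈ subdiff φ y₂) : 0 ≤ ⟪u₁ - u₂, y₁ - y₂⟫ := by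
  have h₁₂ := h₁ y₂
  have h₂₁ := h₂ y₁
  simp only [inner_sub_left, inner_sub_right] at h₁₂ h₂₁ ⊢
  linarith

theorem neg_add_mem_subdiff_of_forall_add_quadratic_le (hφ : ConvexOn ℝ univ φ)
    {G : EuclideanSpace ℝ (Fin n) →L[ℝ] EuclideanSpace ℝ (Fin n)}
    (hG : (G : EuclideanSpace ℝ (Fin n) →ₗ[ℝ] EuclideanSpace ℝ (Fin n)).IsSymmetric)
    {v z p : EuclideanSpace ℝ (Fin n)}
    (hp : ∀ y, φ p + ⟪v, p⟫ + 1 / 2 * ⟪G (p - z), p - z⟫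
      ≤ φ y + ⟪v, y⟫ + 1 / 2 * ⟪G (y - z), y - z⟫) :
    -(v + G (p - z)) ∈ subdiff φ p := by
  intro y
  set u := y - p
  set X := φ y - φ p + ⟪v, u⟫ + ⟪G (p - z), u⟫
  suffices 0 ≤ X by
    rw [inner_neg_left, inner_add_left]; linarith
  -- compare `p` with the points `p + t • u`, `0 < t < 1`, and let `t → 0`
  have hX : ∀ t ∈ Ioo (0 : ℝ) 1, -(t / 2 * ⟪G u, u⟫) ≤ X := by
    rintro t ⟨ht₀, ht₁⟩
    have hconv : φ (p + t • u) ≤ (1 - t) * φ p + t * φ y := by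
      have := hφ.2 (mem_univ p) (mem_univ y) (by linarith : (0 : ℝ) ≤ 1 - t) ht₀.le (by ring)
      rwa [show (1 - t) • p + t • y = p + t • u by module] at this
    have hquad : ⟪G (p + t • u - z), p + t • u - z⟫
        = ⟪G (p - z), p - z⟫ + 2 * t * ⟪G (p - z), u⟫ + t ^ 2 * ⟪G u, u⟫ := by
      have hsymm := hG (p - z) u
      simp only [ContinuousLinearMap.coe_coe] at hsymm
      rw [show p + t • u - z = (p - z) + t • u by abel]
      simp only [map_add, map_smul, inner_add_left, inner_add_right, real_inner_smul_left,
        real_inner_smul_right]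
      rw [real_inner_comm (p - z) (G u), ← hsymm]
      ring
    have hmin := hp (p + t • u)
    rw [hquad, inner_add_right, real_inner_smul_right] at hmin
    have : 0 ≤ t * (X + t / 2 * ⟪G u, u⟫) := by nlinarith
    nlinarith [(mul_nonneg_iff_of_pos_left ht₀).1 this]
  have hlim : Tendsto (fun t : ℝ => -(t / 2 * ⟪G u, u⟫)) (𝓝[>] 0) (𝓝 0) := by
    refine Tendsto.mono_left ?_ nhdsWithin_le_nhds
    exact ((continuous_id.div_const 2).mul_const _).neg.tendsto' 0 0 (by simp)
  exact le_of_tendsto hlim (eventually_of_mem (Ioo_mem_nhdsGT one_pos) hX)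

theorem proxPt_spec (hφ : ConvexOn ℝ univ φ) (z y : EuclideanSpace ℝ (Fin n)) :
    φ (proxPt φ z) + 1 / 2 * ‖proxPt φ z - z‖ ^ 2 ≤ φ y + 1 / 2 * ‖y - z‖ ^ 2 := by
  refine Classical.epsilon_spec (p := fun p => ∀ y, φ p + 1 / 2 * ‖p - z‖ ^ 2
    ≤ φ y + 1 / 2 * ‖y - z‖ ^ 2) ?_ y
  obtain ⟨p, hp⟩ := hφ.exists_forall_add_quadratic_le (ContinuousLinearMap.id ℝ _) one_pos
    (by simp) 0 z
  exact ⟨p, by simpa [real_inner_self_eq_norm_sq] using hp⟩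

theorem sub_proxPt_mem_subdiff (hφ : ConvexOn ℝ univ φ) (z : EuclideanSpace ℝ (Fin n)) :
    z - proxPt φ z ∈ subdiff φ (proxPt φ z) := by
  have := neg_add_mem_subdiff_of_forall_add_quadratic_le hφ (G := ContinuousLinearMap.id ℝ _)
    (v := 0) (z := z) (p := proxPt φ z) (fun _ _ => rfl)
    (by simpa [real_inner_self_eq_norm_sq] using proxPt_spec hφ z)
  simpa using this

theorem proxPt_add_eq_of_mem_subdiff (hφ : ConvexOn ℝ univ φ) {p v : EuclideanSpace ℝ (Fin n)}
    (h : v ∈ subdiff φ p) : proxPt φ (p + v) = p := by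
  set q := proxPt φ (p + v)
  have hq := proxPt_spec hφ (p + v) p
  have hsub := h q
  have hexp : ‖q - (p + v)‖ ^ 2 = ‖q - p‖ ^ 2 - 2 * ⟪v, q - p⟫ + ‖v‖ ^ 2 := by
    rw [show q - (p + v) = (q - p) - v by abel, norm_sub_sq_real, real_inner_comm]
  rw [hexp, show p - (p + v) = -v by abel, norm_neg] at hq
  have : ‖q - p‖ ^ 2 ≤ 0 := by linarith
  rw [← sub_eq_zero, ← norm_eq_zero]
  nlinarith [norm_nonneg (q - p)]

theorem norm_proxPt_sub_le (hφ : ConvexOn ℝ univ φ) (z₁ z₂ : EuclideanSpace ℝ (Fin n)) :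
    ‖proxPt φ z₁ - proxPt φ z₂‖ ≤ ‖z₁ - z₂‖ := by
  have hmono := inner_sub_nonneg_of_mem_subdiff (sub_proxPt_mem_subdiff hφ z₁)
    (sub_proxPt_mem_subdiff hφ z₂)
  rw [show z₁ - proxPt φ z₁ - (z₂ - proxPt φ z₂) = (z₁ - z₂) - (proxPt φ z₁ - proxPt φ z₂) by
    abel, inner_sub_left, real_inner_self_eq_norm_sq] at hmono
  set w := proxPt φ z₁ - proxPt φ z₂
  have := real_inner_le_norm (z₁ - z₂) w
  nlinarith [norm_nonneg w, norm_nonneg (z₁ - z₂)]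

theorem norm_resid_le_of_mem_subdiff {f : EuclideanSpace ℝ (Fin n) → ℝ}
    (hφ : ConvexOn ℝ univ φ) {x xbar : EuclideanSpace ℝ (Fin n)} {Lg : ℝ}
    (hxbar : -gradient f xbar ∈ subdiff φ xbar)
    (hlip : ‖gradient f x - gradient f xbar‖ ≤ Lg * ‖x - xbar‖) :
    ‖resid f φ x‖ ≤ (2 + Lg) * ‖x - xbar‖ := by
  have hfix : proxPt φ (xbar - gradient f xbar) = xbar := by
    simpa [sub_eq_add_neg] using proxPt_add_eq_of_mem_subdiff hφ hxbar
  have hprox := norm_proxPt_sub_le hφ (xbar - gradient f xbar) (x - gradient f x)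
  rw [hfix] at hprox
  calc ‖resid f φ x‖ = ‖(x - xbar) + (xbar - proxPt φ (x - gradient f x))‖ := by
        rw [resid]; abel_nf
    _ ≤ ‖x - xbar‖ + ‖(xbar - x) - (gradient f xbar - gradient f x)‖ :=
        (norm_add_le _ _).trans (add_le_add_right (hprox.trans_eq (by abel_nf)) _)
    _ ≤ ‖x - xbar‖ + (‖x - xbar‖ + Lg * ‖x - xbar‖) := by
        have := norm_sub_le (xbar - x) (gradient f xbar - gradient f x)
        rw [norm_sub_rev xbar, norm_sub_rev (gradient f xbar)] at this
        linarith
    _ = (2 + Lg) * ‖x - xbar‖ := by ring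

theorem isClosed_setOf_mem_subdiff (hφ : Continuous φ)
    {g : EuclideanSpace ℝ (Fin n) → EuclideanSpace ℝ (Fin n)} (hg : Continuous g) : IsClosed {y | g y ∈ subdiff φ y} := by
  have : {y | g y ∈ subdiff φ y} = ⋂ z, {y | φ y + ⟪g y, z - y⟫ ≤ φ z} := by
    ext y; simp only [mem_iInter]; rfl
  rw [this]
  exact isClosed_iInter fun z => isClosed_le (by fun_prop) continuous_const

end Subdifferential

section InexactStep

variable {n : ℕ} {φ : EuclideanSpace ℝ (Fin n) → ℝ}
  {G : EuclideanSpace ℝ (Fin n) →L[ℝ] EuclideanSpace ℝ (Fin n)} {μ : ℝ}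

theorem mul_norm_sub_le_of_neg_add_mem_subdiff (hG : ∀ h, μ * ‖h‖ ^ 2 ≤ ⟪G h, h⟫)
    {y₁ y₂ w₁ w₂ : EuclideanSpace ℝ (Fin n)}
    (h₁ : -(w₁ + G y₁) ∈ subdiff φ y₁) (h₂ : -(w₂ + G y₂) ∈ subdiff φ y₂) :
    μ * ‖y₁ - y₂‖ ≤ ‖w₁ - w₂‖ := by
  have hmono := inner_sub_nonneg_of_mem_subdiff h₁ h₂
  rw [show -(w₁ + G y₁) - -(w₂ + G y₂) = -(w₁ - w₂) - G (y₁ - y₂) by rw [map_sub]; abel,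
    inner_sub_left, inner_neg_left] at hmono
  rcases (norm_nonneg (y₁ - y₂)).eq_or_lt with h | h
  · rw [← h, mul_zero]; exact norm_nonneg _
  refine le_of_mul_le_mul_right ?_ h
  nlinarith [hG (y₁ - y₂), neg_le_of_abs_le (abs_real_inner_le_norm (w₁ - w₂) (y₁ - y₂))]

theorem mul_norm_sub_le_of_add_sub_mem_subdiff (hG : ∀ h, μ * ‖h‖ ^ 2 ≤ ⟪G h, h⟫)
    {y y' e u : EuclideanSpace ℝ (Fin n)} (hu : u ∈ subdiff φ y')
    (he : e + u - G (y - y') ∈ subdiff φ (y - e)) :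
    μ * ‖y - y'‖ ≤ (1 + ‖G‖) * ‖e‖ := by
  have hmono := inner_sub_nonneg_of_mem_subdiff he hu
  rw [show e + u - G (y - y') - u = e - G (y - y') by abel,
    show y - e - y' = (y - y') - e by abel] at hmono
  set d := y - y'
  simp only [inner_sub_left, inner_sub_right, real_inner_self_eq_norm_sq] at hmono
  rcases (norm_nonneg d).eq_or_lt with h | h
  · rw [← h, mul_zero]; positivity
  refine le_of_mul_le_mul_right ?_ h
  have hGe : ⟪G d, e⟫ ≤ ‖G‖ * ‖d‖ * ‖e‖ :=
    (real_inner_le_norm _ _).trans (mul_le_mul_of_nonneg_right (G.le_opNorm _) (norm_nonneg _))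
  nlinarith [hG d, real_inner_le_norm e d, norm_nonneg e]

theorem mul_norm_sub_le_of_inexact_prox (hφ : ConvexOn ℝ univ φ)
    (hGsymm : (G : EuclideanSpace ℝ (Fin n) →ₗ[ℝ] EuclideanSpace ℝ (Fin n)).IsSymmetric)
    (hG : ∀ h, μ * ‖h‖ ^ 2 ≤ ⟪G h, h⟫) (hμ : 0 < μ) {x xhat xbar g g' : EuclideanSpace ℝ (Fin n)}
    (hxbar : -g' ∈ subdiff φ xbar) :
    μ * ‖xhat - x‖ ≤ (1 + ‖G‖) * ‖xhat - proxPt φ (xhat - g - G (xhat - x))‖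
      + ‖g - g' + G (xbar - x)‖ + μ * ‖xbar - x‖ := by
  obtain ⟨x', hx'⟩ := hφ.exists_forall_add_quadratic_le G hμ hG g x
  have hx'sub := neg_add_mem_subdiff_of_forall_add_quadratic_le hφ hGsymm hx'
  set z := xhat - g - G (xhat - x) with hz
  have h₁ : μ * ‖xhat - x'‖ ≤ (1 + ‖G‖) * ‖xhat - proxPt φ z‖ := by
    refine mul_norm_sub_le_of_add_sub_mem_subdiff hG hx'sub ?_
    have hsplit : G (xhat - x) = G (x' - x) + G (xhat - x') := by
      rw [← map_add, sub_add_sub_cancel']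
    rw [sub_sub_cancel, show xhat - proxPt φ z + -(g + G (x' - x)) - G (xhat - x')
      = z - proxPt φ z by rw [hz, hsplit]; abel]
    exact sub_proxPt_mem_subdiff hφ z
  have h₂ : μ * ‖x' - xbar‖ ≤ ‖g - g' + G (xbar - x)‖ := by
    convert mul_norm_sub_le_of_neg_add_mem_subdiff hG (w₁ := g - G x) (w₂ := g' - G xbar)
      (y₁ := x') (y₂ := xbar) (by convert hx'sub using 2; rw [map_sub]; abel)
      (by convert hxbar using 1; abel) using 2
    rw [map_sub]; abel
  nlinarith [norm_sub_le_norm_sub_add_norm_sub xhat xbar x,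
    norm_sub_le_norm_sub_add_norm_sub xhat x' xbar]

end InexactStep

theorem norm_sub_sub_le_of_norm_fderiv_sub_le {E G : Type*} [NormedAddCommGroup E]
    [NormedSpace ℝ E] [NormedAddCommGroup G] [NormedSpace ℝ G] {g : E → G} {g' : E → E →L[ℝ] G}
    (hg : ∀ z, HasFDerivAt g (g' z) z) {x y : E} {K : ℝ}
    (hK : ∀ t ∈ Ico (0 : ℝ) 1, ‖g' (x + t • (y - x)) - g' x‖ ≤ K * t) :
    ‖g y - g x - g' x (y - x)‖ ≤ K / 2 * ‖y - x‖ := by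
  have hpath : ∀ t : ℝ, HasDerivAt (fun t : ℝ => x + t • (y - x)) (y - x) t := fun t => by
    simpa using ((hasDerivAt_id t).smul_const (y - x)).const_add x
  have hderiv : ∀ t : ℝ, HasDerivAt (fun t : ℝ => g (x + t • (y - x)) - g x - t • g' x (y - x))
      (g' (x + t • (y - x)) (y - x) - g' x (y - x)) t := fun t => by
    have h := (((hg _).comp_hasDerivAt t (hpath t)).sub_const (g x)).sub
      ((hasDerivAt_id t).smul_const (g' x (y - x)))
    rw [one_smul] at h
    exact h
  have := image_norm_le_of_norm_deriv_right_le_deriv_boundary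
    (B := fun t => K * ‖y - x‖ * (t ^ 2 / 2)) (B' := fun t => K * ‖y - x‖ * t)
    (fun t _ => (hderiv t).continuousAt.continuousWithinAt)
    (fun t _ => (hderiv t).hasDerivWithinAt) (by simp)
    (fun t => by simpa using ((hasDerivAt_pow 2 t).div_const 2).const_mul (K * ‖y - x‖))
    (fun t ht => by
      rw [← sub_apply, mul_right_comm]
      exact (ContinuousLinearMap.le_opNorm _ _).trans
        (mul_le_mul_of_nonneg_right (hK t ht) (norm_nonneg _)))
    (right_mem_Icc.2 zero_le_one)
  simp only [one_smul, add_sub_cancel, one_pow] at this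
  linarith

theorem isClosed_setOf_forall_inner_nonneg {X F : Type*} [TopologicalSpace X]
    [NormedAddCommGroup F] [InnerProductSpace ℝ F] {B : X → F →L[ℝ] F} (hB : Continuous B) :
    IsClosed {y | ∀ u, 0 ≤ ⟪B y u, u⟫} := by
  rw [ofPred_forall]
  exact isClosed_iInter fun u => isClosed_le continuous_const (by fun_prop)

section Composition

variable {E F : Type*} [NormedAddCommGroup E] [InnerProductSpace ℝ E] [CompleteSpace E]
  [NormedAddCommGroup F] [InnerProductSpace ℝ F] [CompleteSpace F]
  {ψ : F → ℝ} {A : E →L[ℝ] F} {b : F} {f : E → ℝ}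

open ContinuousLinearMap

theorem gradient_comp_affine (hψ : Differentiable ℝ ψ) (hf : ∀ y, f y = ψ (A y - b)) (x : E) :
    gradient f x = adjoint A (gradient ψ (A x - b)) := by
  have hfd : HasFDerivAt f ((fderiv ℝ ψ (A x - b)).comp A) x := by
    rw [funext hf]
    exact (hψ _).hasFDerivAt.comp x (A.hasFDerivAt.sub_const b)
  refine (hasGradientAt_iff_hasFDerivAt.2 (hfd.congr_fderiv (ext fun w => ?_))).gradient
  rw [comp_apply, InnerProductSpace.toDual_apply_apply, adjoint_inner_left]
  exact InnerProductSpace.toDual_symm_apply.symm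

theorem ContDiff.contDiff_one_gradient (hψ : ContDiff ℝ 2 ψ) : ContDiff ℝ 1 (gradient ψ) :=
  (InnerProductSpace.toDual ℝ F).symm.contDiff.comp (hψ.fderiv_right (by norm_num))

theorem hasFDerivAt_gradient_comp_affine (hψ : ContDiff ℝ 2 ψ) (hf : ∀ y, f y = ψ (A y - b))
    (x : E) :
    HasFDerivAt (gradient f) (adjoint A ∘L fderiv ℝ (gradient ψ) (A x - b) ∘L A) x := by
  rw [funext (gradient_comp_affine (hψ.differentiable (by norm_num)) hf)]
  exact (adjoint A).hasFDerivAt.comp x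
    (((hψ.contDiff_one_gradient.differentiable one_ne_zero) _).hasFDerivAt.comp x
      (A.hasFDerivAt.sub_const b))

theorem fderiv_gradient_comp_affine (hψ : ContDiff ℝ 2 ψ) (hf : ∀ y, f y = ψ (A y - b)) (x : E) :
    fderiv ℝ (gradient f) x = adjoint A ∘L fderiv ℝ (gradient ψ) (A x - b) ∘L A :=
  (hasFDerivAt_gradient_comp_affine hψ hf x).fderiv

theorem isSymmetric_fderiv_gradient (hψ : ContDiff ℝ 2 ψ) (u : F) :
    (fderiv ℝ (gradient ψ) u : F →ₗ[ℝ] F).IsSymmetric := by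
  intro w₁ w₂
  have hsymm := (hψ.contDiffAt (x := u)).isSymmSndFDerivAt (by simp) w₁ w₂
  have hde : gradient ψ = (InnerProductSpace.toDual ℝ F).symm ∘ fderiv ℝ ψ := rfl
  rw [coe_coe, hde, LinearIsometryEquiv.comp_fderiv]
  simp only [coe_comp, Function.comp_apply, ContinuousLinearEquiv.coe_coe,
    LinearIsometryEquiv.coe_toContinuousLinearEquiv]
  rw [InnerProductSpace.toDual_symm_apply, real_inner_comm, InnerProductSpace.toDual_symm_apply]
  exact hsymm

theorem norm_adjoint_comp_comp_le (B : F →L[ℝ] F) : ‖adjoint A ∘L B ∘L A‖ ≤ ‖A‖ ^ 2 * ‖B‖ :=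
  calc ‖adjoint A ∘L B ∘L A‖ ≤ ‖adjoint A‖ * (‖B‖ * ‖A‖) :=
        (opNorm_comp_le _ _).trans (mul_le_mul_of_nonneg_left (opNorm_comp_le _ _) (norm_nonneg _))
    _ = ‖A‖ ^ 2 * ‖B‖ := by rw [LinearIsometryEquiv.norm_map]; ring

theorem norm_fderiv_gradient_le_of_lipschitz (hψ : ContDiff ℝ 2 ψ) (hf : ∀ y, f y = ψ (A y - b))
    {x : E} {s : Set E} (hs : s ∈ 𝓝 x) {Lg : ℝ} (hLg : 0 ≤ Lg)
    (hlip : ∀ u ∈ s, ∀ v ∈ s, ‖gradient f u - gradient f v‖ ≤ Lg * ‖u - v‖) :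
    ‖fderiv ℝ (gradient f) x‖ ≤ Lg :=
  (hasFDerivAt_gradient_comp_affine hψ hf x).fderiv ▸
    (hasFDerivAt_gradient_comp_affine hψ hf x).le_of_lip' hLg
      (eventually_of_mem hs fun y hy => hlip y hy x (mem_of_mem_nhds hs))

theorem norm_gradient_sub_sub_fderiv_le (hψ : ContDiff ℝ 2 ψ) (hf : ∀ y, f y = ψ (A y - b))
    {s : Set E} (hs : Convex ℝ s) {x y : E} (hx : x ∈ s) (hy : y ∈ s) {Lψ : ℝ} (hLψ : 0 ≤ Lψ)
    (hlip : ∀ u ∈ s, ∀ v ∈ s,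
      ‖fderiv ℝ (gradient ψ) (A u - b) - fderiv ℝ (gradient ψ) (A v - b)‖ ≤ Lψ * ‖A u - A v‖) :
    ‖gradient f y - gradient f x - fderiv ℝ (gradient f) x (y - x)‖
      ≤ ‖A‖ ^ 3 * Lψ / 2 * ‖y - x‖ ^ 2 := by
  have hK : ∀ t ∈ Ico (0 : ℝ) 1, ‖fderiv ℝ (gradient f) (x + t • (y - x))
      - fderiv ℝ (gradient f) x‖ ≤ ‖A‖ ^ 3 * Lψ * ‖y - x‖ * t := by
    rintro t ⟨ht₀, ht₁⟩
    have hseg : x + t • (y - x) ∈ s := by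
      simpa [add_comm] using hs.add_smul_sub_mem hx hy ⟨ht₀, ht₁.le⟩
    rw [fderiv_gradient_comp_affine hψ hf, fderiv_gradient_comp_affine hψ hf, ← comp_sub,
      ← sub_comp]
    calc _ ≤ ‖A‖ ^ 2 * (Lψ * ‖A (x + t • (y - x)) - A x‖) :=
          (norm_adjoint_comp_comp_le _).trans
            (mul_le_mul_of_nonneg_left (hlip _ hseg _ hx) (sq_nonneg _))
      _ ≤ ‖A‖ ^ 2 * (Lψ * (t * (‖A‖ * ‖y - x‖))) := by
          rw [← map_sub, add_sub_cancel_left, map_smul, norm_smul, Real.norm_of_nonneg ht₀]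
          gcongr
          exact A.le_opNorm _
      _ = _ := by ring
  have := norm_sub_sub_le_of_norm_fderiv_sub_le
    (fun z => (hasFDerivAt_gradient_comp_affine hψ hf z).congr_fderiv
      (fderiv_gradient_comp_affine hψ hf z).symm) hK
  rw [sq]
  linarith

end Composition

section LambdaMin

variable {m : ℕ} (T : EuclideanSpace ℝ (Fin m) →L[ℝ] EuclideanSpace ℝ (Fin m))

theorem lambdaMin_mul_sq_le_inner (u : EuclideanSpace ℝ (Fin m)) :
    lambdaMin T * ‖u‖ ^ 2 ≤ ⟪T u, u⟫ := by
  rcases eq_or_ne u 0 with rfl | hu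
  · simp
  have hn : 0 < ‖u‖ := norm_pos_iff.2 hu
  have hbdd : BddBelow (range fun v : {v : EuclideanSpace ℝ (Fin m) // ‖v‖ = 1} =>
      ⟪T v.1, v.1⟫) := by
    refine ⟨-‖T‖, ?_⟩
    rintro _ ⟨⟨v, hv⟩, rfl⟩
    have := (neg_le_of_abs_le (abs_real_inner_le_norm (T v) v)).trans'
      (neg_le_neg ((mul_le_mul_of_nonneg_right (T.le_opNorm v) (norm_nonneg v))))
    simpa [hv] using this
  have hv : ‖‖u‖⁻¹ • u‖ = 1 := by rw [norm_smul, norm_inv, norm_norm, inv_mul_cancel₀ hn.ne']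
  have hle := ciInf_le hbdd ⟨_, hv⟩
  simp only [map_smul, real_inner_smul_left, real_inner_smul_right] at hle
  have := mul_le_mul_of_nonneg_right hle (sq_nonneg ‖u‖)
  field_simp at this
  exact this

theorem max_neg_lambdaMin_le_norm_sub
    (S : EuclideanSpace ℝ (Fin m) →L[ℝ] EuclideanSpace ℝ (Fin m)) (hS : ∀ u, 0 ≤ ⟪S u, u⟫) :
    max (-lambdaMin T) 0 ≤ ‖T - S‖ := by
  refine max_le (neg_le.1 ?_) (norm_nonneg _)
  rcases isEmpty_or_nonempty {u : EuclideanSpace ℝ (Fin m) // ‖u‖ = 1} with h | h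
  · rw [lambdaMin, iInf_of_isEmpty, Real.sInf_empty, neg_nonpos]
    exact norm_nonneg _
  refine le_ciInf fun ⟨u, hu⟩ => ?_
  have h₁ := neg_le_of_abs_le (abs_real_inner_le_norm ((T - S) u) u)
  have h₂ := (T - S).le_opNorm u
  rw [hu, mul_one] at h₁ h₂
  simp only [sub_apply, inner_sub_left] at h₁ h₂
  show -‖T - S‖ ≤ ⟪T u, u⟫
  linarith [hS u]

theorem neg_mul_sq_le_inner_of_one_le {a : ℝ} (ha : 1 ≤ a) (u : EuclideanSpace ℝ (Fin m)) :
    -(a * max (-lambdaMin T) 0) * ‖u‖ ^ 2 ≤ ⟪T u, u⟫ := by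
  refine le_trans (mul_le_mul_of_nonneg_right ?_ (sq_nonneg _)) (lambdaMin_mul_sq_le_inner T u)
  nlinarith [le_max_left (-lambdaMin T) 0, le_max_right (-lambdaMin T) 0]

end LambdaMin

section RegularizedHessian

variable {E F : Type*} [NormedAddCommGroup E] [InnerProductSpace ℝ E] [CompleteSpace E]
  [NormedAddCommGroup F] [InnerProductSpace ℝ F] [CompleteSpace F]

open ContinuousLinearMap

/-- With `B = ∇²ψ(Axᵏ - b)`, `Λ = Λₖ` and `μ = μₖ` this is the paper's `Gₖ = Hₖ + μₖ I`. -/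
def regHessian (A : E →L[ℝ] F) (B : F →L[ℝ] F) (Λ μ : ℝ) : E →L[ℝ] E :=
  adjoint A ∘L B ∘L A + Λ • (adjoint A ∘L A) + μ • ContinuousLinearMap.id ℝ E

variable (A : E →L[ℝ] F) {B : F →L[ℝ] F} {Λ μ : ℝ}

theorem regHessian_apply (h : E) :
    regHessian A B Λ μ h = adjoint A (B (A h)) + Λ • adjoint A (A h) + μ • h := rfl

theorem mul_sq_le_inner_regHessian (hB : ∀ w, -Λ * ‖w‖ ^ 2 ≤ ⟪B w, w⟫) (h : E) :
    μ * ‖h‖ ^ 2 ≤ ⟪regHessian A B Λ μ h, h⟫ := by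
  simp only [regHessian_apply, inner_add_left, real_inner_smul_left, adjoint_inner_left,
    real_inner_self_eq_norm_sq]
  linarith [hB (A h)]

theorem isSymmetric_regHessian (hB : (B : F →ₗ[ℝ] F).IsSymmetric) :
    (regHessian A B Λ μ : E →ₗ[ℝ] E).IsSymmetric := by
  intro u w
  simp only [coe_coe, regHessian_apply, inner_add_left, inner_add_right, real_inner_smul_left,
    real_inner_smul_right, adjoint_inner_left, adjoint_inner_right]
  rw [← coe_coe B, hB, coe_coe]

theorem norm_regHessian_le (hΛ : 0 ≤ Λ) (hμ : 0 ≤ μ) :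
    ‖regHessian A B Λ μ‖ ≤ ‖adjoint A ∘L B ∘L A‖ + Λ * ‖A‖ ^ 2 + μ := by
  refine (norm_add₃_le ..).trans (add_le_add_three le_rfl ?_ ?_)
  · rw [norm_smul, norm_adjoint_comp_self, Real.norm_of_nonneg hΛ, sq]
  · rw [norm_smul, Real.norm_of_nonneg hμ]
    exact mul_le_of_le_one_right hμ norm_id_le

theorem norm_sub_add_regHessian_le (hΛ : 0 ≤ Λ) (hμ : 0 ≤ μ) (g g' h : E) :
    ‖g - g' + regHessian A B Λ μ h‖
      ≤ ‖g' - g - (adjoint A ∘L B ∘L A) h‖ + Λ * ‖A‖ ^ 2 * ‖h‖ + μ * ‖h‖ := by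
  rw [show g - g' + regHessian A B Λ μ h
    = -(g' - g - (adjoint A ∘L B ∘L A) h) + Λ • (adjoint A ∘L A) h + μ • h by
      rw [regHessian_apply]; simp only [comp_apply]; abel]
  refine (norm_add₃_le ..).trans (add_le_add_three (norm_neg _).le ?_ ?_)
  · rw [norm_smul, Real.norm_of_nonneg hΛ, mul_assoc, sq, ← norm_adjoint_comp_self]
    exact mul_le_mul_of_nonneg_left (le_opNorm _ _) hΛ
  · rw [norm_smul, Real.norm_of_nonneg hμ]

end RegularizedHessian

theorem rpow_one_add_le_mul {r d K τ δ : ℝ} (hr : 0 < r) (hK : 1 ≤ K) (hrd : r ≤ K * d)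
    (hd : K * d ≤ 1) (hτ : δ ≤ τ) : r ^ (1 + τ) ≤ K ^ (1 + τ - δ) * d * r ^ δ := by
  have hd₀ : 0 ≤ d := nonneg_of_mul_nonneg_right (hr.le.trans hrd) (by linarith)
  have hd₁ : d ≤ 1 := by nlinarith
  calc r ^ (1 + τ) = r ^ (1 + τ - δ) * r ^ δ := by rw [← Real.rpow_add hr]; ring_nf
    _ ≤ (K ^ (1 + τ - δ) * d ^ (1 + τ - δ)) * r ^ δ := by
        rw [← Real.mul_rpow (by linarith) hd₀]
        gcongr
        linarith
    _ ≤ K ^ (1 + τ - δ) * d * r ^ δ := by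
        gcongr
        simpa using Real.rpow_le_rpow_of_exponent_ge' hd₀ hd₁ zero_le_one
          (by linarith : 1 ≤ 1 + τ - δ)

section Step

variable {n m : ℕ} {ψ : EuclideanSpace ℝ (Fin m) → ℝ}
  {A : EuclideanSpace ℝ (Fin n) →L[ℝ] EuclideanSpace ℝ (Fin m)} {b : EuclideanSpace ℝ (Fin m)}
  {φ f : EuclideanSpace ℝ (Fin n) → ℝ}

theorem isClosed_setOf_strongly_stationary (hψ : ContDiff ℝ 2 ψ) (hφ : ConvexOn ℝ univ φ)
    (hf : ∀ y, f y = ψ (A y - b)) :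
    IsClosed {y | -gradient f y ∈ subdiff φ y ∧
      ∀ u, 0 ≤ ⟪(fderiv ℝ (gradient ψ) (A y - b)) u, u⟫} := by
  have hgrad : Continuous (gradient f) :=
    Differentiable.continuous fun y => (hasFDerivAt_gradient_comp_affine hψ hf y).differentiableAt
  have hHess : Continuous fun y => fderiv ℝ (gradient ψ) (A y - b) :=
    (hψ.contDiff_one_gradient.continuous_fderiv one_ne_zero).comp
      (A.continuous.sub continuous_const)
  exact (isClosed_setOf_mem_subdiff (continuousOn_univ.1 (hφ.continuousOn isOpen_univ))
    hgrad.neg).inter (isClosed_setOf_forall_inner_nonneg hHess)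

theorem mul_norm_inexact_step_le (hψ : ContDiff ℝ 2 ψ) (hφ : ConvexOn ℝ univ φ)
    (hf : ∀ y, f y = ψ (A y - b)) {x xhat xbar : EuclideanSpace ℝ (Fin n)}
    (hxbar : -gradient f xbar ∈ subdiff φ xbar)
    (hpsd : ∀ u, 0 ≤ ⟪fderiv ℝ (gradient ψ) (A xbar - b) u, u⟫) {a Lψ Lg Λ μ : ℝ}
    {G : EuclideanSpace ℝ (Fin n) →L[ℝ] EuclideanSpace ℝ (Fin n)}
    (hΛ : Λ = a * max (-lambdaMin (fderiv ℝ (gradient ψ) (A x - b))) 0)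
    (hG : G = regHessian A (fderiv ℝ (gradient ψ) (A x - b)) Λ μ) (ha : 1 ≤ a) (hμ : 0 < μ)
    (hLψ : 0 ≤ Lψ) {s : Set (EuclideanSpace ℝ (Fin n))} (hs : Convex ℝ s) (hxs : x ∈ s)
    (hxbars : xbar ∈ s)
    (hlipψ : ∀ u ∈ s, ∀ v ∈ s,
      ‖fderiv ℝ (gradient ψ) (A u - b) - fderiv ℝ (gradient ψ) (A v - b)‖ ≤ Lψ * ‖A u - A v‖)
    (hHess : ‖fderiv ℝ (gradient f) x‖ ≤ Lg) (hd : ‖x - xbar‖ ≤ 1) :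
    μ * ‖xhat - x‖ ≤ (1 + Lg + a * (‖A‖ ^ 3 * Lψ) + μ)
        * ‖xhat - proxPt φ (xhat - gradient f x - G (xhat - x))‖
      + (‖A‖ ^ 3 * Lψ / 2 + a * (‖A‖ ^ 3 * Lψ)) * ‖x - xbar‖ ^ 2 + 2 * μ * ‖x - xbar‖ := by
  set L := ‖A‖ ^ 3 * Lψ
  set d := ‖x - xbar‖
  have haL : 0 ≤ a * L := mul_nonneg (by linarith) (by positivity)
  have hΛ₀ : 0 ≤ Λ := hΛ ▸ mul_nonneg (by linarith) (le_max_right _ _)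
  -- `∇²ψ(A x̄ - b) ⪰ 0`, so the negative curvature at `x` is at most the Lipschitz defect
  have hΛd : Λ * ‖A‖ ^ 2 ≤ a * L * d := by
    have hB := (max_neg_lambdaMin_le_norm_sub _ _ hpsd).trans (hlipψ x hxs xbar hxbars)
    rw [← map_sub] at hB
    have := hB.trans (mul_le_mul_of_nonneg_left (A.le_opNorm _) hLψ)
    rw [hΛ]
    calc _ ≤ a * (Lψ * (‖A‖ * d)) * ‖A‖ ^ 2 := by gcongr
      _ = a * L * d := by ring
  have hHess' := fderiv_gradient_comp_affine hψ hf x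
  have hGn : ‖G‖ ≤ Lg + a * L + μ := by
    have := norm_regHessian_le A (B := fderiv ℝ (gradient ψ) (A x - b)) hΛ₀ hμ.le
    rw [← hHess', ← hG] at this
    linarith [mul_le_of_le_one_right haL hd]
  have hQ : ‖gradient f x - gradient f xbar + G (xbar - x)‖ ≤ (L / 2 + a * L) * d ^ 2 + μ * d := by
    have := norm_sub_add_regHessian_le A (B := fderiv ℝ (gradient ψ) (A x - b)) hΛ₀ hμ.le
      (gradient f x) (gradient f xbar) (xbar - x)
    rw [← hHess', ← hG, norm_sub_rev xbar] at this
    have hT := norm_gradient_sub_sub_fderiv_le hψ hf hs hxs hxbars hLψ hlipψ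
    rw [norm_sub_rev xbar] at hT
    linarith [mul_le_mul_of_nonneg_right hΛd (norm_nonneg (x - xbar))]
  have key := mul_norm_sub_le_of_inexact_prox hφ
    (hG ▸ isSymmetric_regHessian A (isSymmetric_fderiv_gradient hψ _))
    (hG ▸ mul_sq_le_inner_regHessian A (μ := μ)
      (by rw [hΛ]; exact neg_mul_sq_le_inner_of_one_le _ ha))
    hμ (x := x) (xhat := xhat) (g := gradient f x) hxbar
  rw [norm_sub_rev xbar] at key
  linarith [mul_le_mul_of_nonneg_right (add_le_add_left hGn 1)
    (norm_nonneg (xhat - proxPt φ (xhat - gradient f x - G (xhat - x))))]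

theorem norm_inexact_step_le (hψ : ContDiff ℝ 2 ψ) (hφ : ConvexOn ℝ univ φ)
    (hf : ∀ y, f y = ψ (A y - b)) {x xhat xbar : EuclideanSpace ℝ (Fin n)}
    (hxbar : -gradient f xbar ∈ subdiff φ xbar)
    (hpsd : ∀ u, 0 ≤ ⟪fderiv ℝ (gradient ψ) (A xbar - b) u, u⟫) (hr : resid f φ x ≠ 0)
    {θ a ν νmin νbar δ τ qq β Lψ Lg Λ μ : ℝ}
    {G : EuclideanSpace ℝ (Fin n) →L[ℝ] EuclideanSpace ℝ (Fin n)}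
    (hΛ : Λ = a * max (-lambdaMin (fderiv ℝ (gradient ψ) (A x - b))) 0)
    (hμ : μ = ν * ‖resid f φ x‖ ^ δ)
    (hG : G = regHessian A (fderiv ℝ (gradient ψ) (A x - b)) Λ μ)
    (hinex : ‖xhat - proxPt φ (xhat - gradient f x - G (xhat - x))‖
      ≤ θ * ‖resid f φ x‖ ^ (1 + τ))
    (ha : 1 ≤ a) (hθ : 0 ≤ θ) (hνmin : 0 < νmin) (hν : νmin ≤ ν) (hνbar : νmin ≤ νbar)
    (hδ : 0 ≤ δ) (hτ : δ ≤ τ) (hqq : δ ≤ qq) (hβ : 0 < β) (hLψ : 0 ≤ Lψ) (hLg : 0 ≤ Lg)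
    {s : Set (EuclideanSpace ℝ (Fin n))} (hs : Convex ℝ s) (hxs : x ∈ s) (hxbars : xbar ∈ s)
    (hlipψ : ∀ u ∈ s, ∀ v ∈ s,
      ‖fderiv ℝ (gradient ψ) (A u - b) - fderiv ℝ (gradient ψ) (A v - b)‖ ≤ Lψ * ‖A u - A v‖)
    (herr : β * ‖x - xbar‖ ≤ ‖resid f φ x‖ ^ qq) (hHess : ‖fderiv ℝ (gradient f) x‖ ≤ Lg)
    (hres : ‖resid f φ x‖ ≤ (2 + Lg) * ‖x - xbar‖) (hdd : (2 + Lg) * ‖x - xbar‖ ≤ 1) :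
    ‖xhat - x‖ ≤ (νmin⁻¹ * θ * (2 + Lg) ^ (1 + τ - δ)
        * (1 + Lg + a * (‖A‖ ^ 3 * Lψ) + νbar * (2 + Lg) ^ δ)
      + (‖A‖ ^ 3 * Lψ + 2 * a * (‖A‖ ^ 3 * Lψ)) / (2 * νmin * β) + 2) * ‖x - xbar‖ := by
  set L := ‖A‖ ^ 3 * Lψ
  set d := ‖x - xbar‖
  set r := ‖resid f φ x‖
  set S := θ * (2 + Lg) ^ (1 + τ - δ) * d with hS
  have hr₀ : 0 < r := norm_pos_iff.2 hr
  have hr₁ : r ≤ 1 := hres.trans hdd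
  have hd₀ : 0 ≤ d := norm_nonneg _
  have hd₁ : d ≤ 1 := by nlinarith
  have haL : 0 ≤ a * L := mul_nonneg (by linarith) (by positivity)
  have hS₀ : 0 ≤ S := by positivity
  have hrδ₀ : 0 < r ^ δ := Real.rpow_pos_of_pos hr₀ δ
  have hμr : νmin * r ^ δ ≤ μ := hμ ▸ mul_le_mul_of_nonneg_right hν hrδ₀.le
  have hμ₀ : 0 < μ := (mul_pos hνmin hrδ₀).trans_le hμr
  -- the error bound makes `μ` at least proportional to the distance to `X*`
  have hμd : νmin * β * d ≤ μ := by
    have := herr.trans (Real.rpow_le_rpow_of_exponent_ge hr₀ hr₁ hqq)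
    nlinarith
  set Rn := ‖xhat - proxPt φ (xhat - gradient f x - G (xhat - x))‖
  have hR : Rn ≤ S * r ^ δ := by
    refine hinex.trans ?_
    have := rpow_one_add_le_mul hr₀ (by linarith) hres hdd hτ
    calc θ * r ^ (1 + τ) ≤ θ * ((2 + Lg) ^ (1 + τ - δ) * d * r ^ δ) := by gcongr
      _ = S * r ^ δ := by ring
  have hR₁ : Rn ≤ μ * S / νmin := by
    rw [le_div_iff₀ hνmin]
    linarith [mul_le_mul_of_nonneg_left hR hνmin.le, mul_le_mul_of_nonneg_left hμr hS₀]
  have hR₂ : Rn ≤ S * (νbar * (2 + Lg) ^ δ) / νmin := by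
    have : νmin ≤ νbar * (2 + Lg) ^ δ :=
      hνbar.trans (le_mul_of_one_le_right (by linarith) (Real.one_le_rpow (by linarith) hδ))
    rw [le_div_iff₀ hνmin]
    linarith [mul_le_mul_of_nonneg_left hR hνmin.le, mul_le_mul_of_nonneg_left this hS₀,
      mul_le_mul_of_nonneg_left (mul_le_mul_of_nonneg_left
        (Real.rpow_le_one hr₀.le hr₁ hδ) hS₀) hνmin.le]
  have hd₂ : (L / 2 + a * L) * d ^ 2 ≤ μ * ((L + 2 * a * L) / (2 * νmin * β) * d) := by
    rw [show μ * ((L + 2 * a * L) / (2 * νmin * β) * d)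
      = μ * ((L + 2 * a * L) * d) / (2 * νmin * β) by ring, le_div_iff₀ (by positivity)]
    linarith [mul_le_mul_of_nonneg_left hμd (mul_nonneg (by positivity : 0 ≤ L + 2 * a * L) hd₀)]
  refine le_of_mul_le_mul_left ?_ hμ₀
  calc μ * ‖xhat - x‖ ≤ (1 + Lg + a * L + μ) * Rn + (L / 2 + a * L) * d ^ 2 + 2 * μ * d :=
        mul_norm_inexact_step_le hψ hφ hf hxbar hpsd hΛ hG ha hμ₀ hLψ hs hxs hxbars hlipψ hHess hd₁
    _ ≤ (1 + Lg + a * L) * (μ * S / νmin) + μ * (S * (νbar * (2 + Lg) ^ δ) / νmin)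
        + μ * ((L + 2 * a * L) / (2 * νmin * β) * d) + 2 * μ * d := by
        linarith [mul_le_mul_of_nonneg_left hR₁ (by linarith : 0 ≤ 1 + Lg + a * L),
          mul_le_mul_of_nonneg_left hR₂ hμ₀.le]
    _ = _ := by rw [hS]; field_simp

end Step

theorem le_nu_of_update {X : Type*} {x xhat : ℕ → X} {ν ρ : ℕ → ℝ} {unsucc : ℕ → Prop}
    {σ₁ σ₂ c₂ νmin νbar : ℝ} (hσ₂ : 1 < σ₂) (hνmin : 0 < νmin) (hνbar : νmin ≤ νbar)
    (h0 : νmin ≤ ν 0)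
    (hupd : ∀ k,
      (unsucc k → x (k + 1) = x k ∧ ν (k + 1) = σ₂ * ν k) ∧
      (¬unsucc k → x (k + 1) = xhat k ∧
        (ρ k ≤ c₂ → ν (k + 1) = min (ν k) νbar) ∧
        (c₂ < ρ k → ν (k + 1) = min (max (σ₁ * ν k) νmin) νbar))) (k : ℕ) :
    νmin ≤ ν k := by
  induction k with
  | zero => exact h0
  | succ k ih =>
    by_cases hk : unsucc k
    · rw [((hupd k).1 hk).2]; nlinarith
    obtain ⟨-, hle, hgt⟩ := (hupd k).2 hk
    rcases le_or_gt (ρ k) c₂ with h | h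
    · rw [hle h]; exact le_min ih hνbar
    · rw [hgt h]; exact le_min (le_max_right _ _) hνbar

theorem rbar_eq_of_mem {s rbar : ℕ → ℝ} {η : ℝ} (h0 : rbar 0 = s 0)
    (hupd : ∀ k, s (k + 1) ≤ η * rbar k → rbar (k + 1) = s (k + 1)) {k : ℕ}
    (hk : k ∈ {0} ∪ {k | 1 ≤ k ∧ s k ≤ η * rbar (k - 1)}) : rbar k = s k := by
  obtain rfl | ⟨hk, hle⟩ := hk
  · exact h0
  · obtain ⟨j, rfl⟩ := Nat.exists_eq_add_of_le' hk
    exact hupd j hle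

theorem stmt_16_general {n m : ℕ}
    -- problem data: f(x) = ψ(Ax − b), F = f + φ bounded below, φ convex, ψ C²
    (ψ : EuclideanSpace ℝ (Fin m) → ℝ)
    (A : EuclideanSpace ℝ (Fin n) →L[ℝ] EuclideanSpace ℝ (Fin m))
    (b : EuclideanSpace ℝ (Fin m))
    (φ : EuclideanSpace ℝ (Fin n) → ℝ)
    (hψ : ContDiff ℝ 2 ψ) (hφ : ConvexOn ℝ Set.univ φ)
    (f : EuclideanSpace ℝ (Fin n) → ℝ)
    (hf : ∀ y, f y = ψ (A y - b))
    -- algorithm parameters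
    (c₂ σ₁ σ₂ η θ a νmin ν₀ νbar δ τ : ℝ)
    (hσ₂ : 1 < σ₂)
    (hθ : 0 < θ)
    (ha : 1 ≤ a)
    (hνmin : 0 < νmin) (hν₀a : νmin ≤ ν₀) (hν₀b : ν₀ ≤ νbar)
    (hδ0 : 0 < δ) (hτ : δ ≤ τ)
    -- iterates and regularization sequences
    (x xhat : ℕ → EuclideanSpace ℝ (Fin n)) (ν rbar μ : ℕ → ℝ)
    (hν0 : ν 0 = ν₀) (hrbar0 : rbar 0 = ‖resid f φ (x 0)‖)
    (hμ : ∀ k, μ k = ν k * rbar k ^ δ)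
    -- Λ_k, H_k + μ_k I =: G_k, the models q_k, q̂_k, and the subproblem residual R_k
    (Λ : ℕ → ℝ)
    (hΛ : ∀ k, Λ k = a * max (-(lambdaMin (fderiv ℝ (gradient ψ) (A (x k) - b)))) 0)
    (G : ℕ → EuclideanSpace ℝ (Fin n) →L[ℝ] EuclideanSpace ℝ (Fin n))
    (hG : ∀ k, G k = fderiv ℝ (gradient f) (x k)
        + Λ k • ((ContinuousLinearMap.adjoint A).comp A)
        + μ k • ContinuousLinearMap.id ℝ (EuclideanSpace ℝ (Fin n)))
    (R : ℕ → EuclideanSpace ℝ (Fin n) → EuclideanSpace ℝ (Fin n))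
    (hR : ∀ k y, R k y = y - proxPt φ (y - gradient f (x k) - (G k) (y - x k)))
    -- the inexactness criteria satisfied by x̂ᵏ
    (hinex1 : ∀ k, ‖R k (xhat k)‖ ≤
        θ * min ‖resid f φ (x k)‖ (‖resid f φ (x k)‖ ^ (1 + τ)))
    -- dᵏ, pred_k, ared_k, ρ_k
    (d : ℕ → EuclideanSpace ℝ (Fin n)) (hd : ∀ k, d k = xhat k - x k)
    (ρ : ℕ → ℝ)
    -- update rules (unsuccessful / successful / highly successful iterations)
    (unsucc : ℕ → Prop)
    (hupd : ∀ k,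
        (unsucc k → x (k + 1) = x k ∧ ν (k + 1) = σ₂ * ν k) ∧
        (¬unsucc k → x (k + 1) = xhat k ∧
          (ρ k ≤ c₂ → ν (k + 1) = min (ν k) νbar) ∧
          (c₂ < ρ k → ν (k + 1) = min (max (σ₁ * ν k) νmin) νbar)))
    (hrbarupd : ∀ k,
        (‖resid f φ (x (k + 1))‖ ≤ η * rbar k → rbar (k + 1) = ‖resid f φ (x (k + 1))‖) ∧
        (¬‖resid f φ (x (k + 1))‖ ≤ η * rbar k → rbar (k + 1) = rbar k))
    -- no iterate is stationary (otherwise the algorithm terminates)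
    (hrne : ∀ k, resid f φ (x k) ≠ 0)
    -- the index set K
    (K : Set ℕ)
    (hK : K = {0} ∪ {k | 1 ≤ k ∧ ‖resid f φ (x k)‖ ≤ η * rbar (k - 1)})
    -- local assumptions: X* = set of strongly stationary points, x* an accumulation
    -- point of {xᵏ}_{k∈K} lying in X*
    (Xstar : Set (EuclideanSpace ℝ (Fin n)))
    (hXstar : Xstar = {y | -gradient f y ∈ subdiff φ y ∧
        ∀ u, 0 ≤ ⟪(fderiv ℝ (gradient ψ) (A y - b)) u, u⟫})
    (xstar : EuclideanSpace ℝ (Fin n)) (hxstar : xstar ∈ Xstar)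
    -- local Lipschitz continuity of ∇²ψ near x*
    (ε Lψ : ℝ) (hLψ : 0 < Lψ)
    (hlipψ : ∀ u ∈ closedBall xstar ε, ∀ v ∈ closedBall xstar ε,
      ‖fderiv ℝ (gradient ψ) (A u - b) - fderiv ℝ (gradient ψ) (A v - b)‖ ≤ Lψ * ‖A u - A v‖)
    -- Hölderian local error bound of order qq on X*
    (β qq : ℝ) (hβ : 0 < β) (hqq : max δ (1 - δ) < qq)
    (herrbd : ∀ y ∈ closedBall xstar ε, β * infDist y Xstar ≤ ‖resid f φ y‖ ^ qq)
    -- derived constants: ε₀, L = ‖A‖³Lψ, and a Lipschitz constant L_g of ∇f on B_{ε₀}(x*)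
    (ε₀ L Lg : ℝ) (hε₀ : ε₀ = min ε (ε / ‖A‖)) (hL : L = ‖A‖ ^ 3 * Lψ) (hLg : 0 < Lg)
    (hlipg : ∀ u ∈ closedBall xstar ε₀, ∀ v ∈ closedBall xstar ε₀,
      ‖gradient f u - gradient f v‖ ≤ Lg * ‖u - v‖)
    (ε₁ c : ℝ)
    (hε₁ : ε₁ = min (1 / (2 + Lg)) (ε₀ / 2))
    (hc : c = νmin⁻¹ * θ * (2 + Lg) ^ (1 + τ - δ) * (1 + Lg + a * L + νbar * (2 + Lg) ^ δ)
        + (L + 2 * a * L) / (2 * νmin * β) + 2) :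
    ∀ k ∈ K, x k ∈ closedBall xstar ε₁ → ‖d k‖ ≤ c * infDist (x k) Xstar := by
  intro k hk hball
  subst hL hε₁ hc
  have hrbar : rbar k = ‖resid f φ (x k)‖ := rbar_eq_of_mem
    (s := fun j => ‖resid f φ (x j)‖) hrbar0 (fun j => (hrbarupd j).1) (hK ▸ hk)
  have hνk : νmin ≤ ν k := le_nu_of_update hσ₂ hνmin (hν₀a.trans hν₀b) (hν0 ▸ hν₀a) hupd k
  have hXcl : IsClosed Xstar := hXstar ▸ isClosed_setOf_strongly_stationary hψ hφ hf
  obtain ⟨xbar, hxbar, hdist⟩ := hXcl.exists_infDist_eq_dist ⟨xstar, hxstar⟩ (x k)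
  rw [hXstar] at hxbar
  rw [hd, hdist, dist_eq_norm]
  have hdk : ‖x k - xbar‖ ≤ dist (x k) xstar := by
    rw [← dist_eq_norm, ← hdist]; exact infDist_le_dist_of_mem hxstar
  have hxk : dist (x k) xstar ≤ ε₀ / 2 := (mem_closedBall.1 hball).trans (min_le_right _ _)
  have hx₀ : x k ∈ closedBall xstar ε₀ :=
    mem_closedBall.2 (by linarith [dist_nonneg (x := x k) (y := xstar)])
  have hxbar₀ : xbar ∈ closedBall xstar ε₀ := mem_closedBall.2 <|
    (dist_triangle _ (x k) _).trans (by rw [dist_comm xbar, dist_eq_norm]; linarith)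
  have hres := norm_resid_le_of_mem_subdiff hφ hxbar.1 (hlipg _ hx₀ _ hxbar₀)
  -- `ε / ‖A‖ = 0` when `A = 0`, so `0 < ε₀` has to come from `r(xᵏ) ≠ 0`
  have hε₀pos : 0 < ε₀ := by nlinarith [norm_pos_iff.2 (hrne k)]
  have hε₀ε : ε₀ ≤ ε := hε₀ ▸ min_le_left _ _
  have hball₀ := closedBall_subset_closedBall (x := xstar) hε₀ε
  have herr := herrbd _ (hball₀ hx₀)
  rw [hdist, dist_eq_norm] at herr
  have hμk : μ k = ν k * ‖resid f φ (x k)‖ ^ δ := by rw [hμ, hrbar]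
  have hGk : G k = regHessian A (fderiv ℝ (gradient ψ) (A (x k) - b)) (Λ k) (μ k) := by
    rw [hG, fderiv_gradient_comp_affine hψ hf]; rfl
  refine norm_inexact_step_le hψ hφ hf hxbar.1 hxbar.2 (hrne k) (hΛ k) hμk hGk
    (hR k (xhat k) ▸ (hinex1 k).trans (mul_le_mul_of_nonneg_left (min_le_right _ _) hθ.le))
    ha hθ.le hνmin hνk (hν₀a.trans hν₀b) hδ0.le hτ ((le_max_left δ _).trans hqq.le) hβ hLψ.le
    hLg.le (convex_closedBall xstar ε) (hball₀ hx₀) (hball₀ hxbar₀) hlipψ herr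
    (norm_fderiv_gradient_le_of_lipschitz hψ hf
      (closedBall_mem_nhds_of_mem (mem_ball.2 (by linarith))) hLg.le hlipg) hres ?_
  have := hdk.trans ((mem_closedBall.1 hball).trans (min_le_left _ _))
  rw [le_div_iff₀ (by linarith)] at this
  linarith

/-- Lemma 5.5: with `ε₁ = min{1/(2+L_g), ε₀/2}` and
`c = ν_min⁻¹θ(2+L_g)^{1+τ−δ}(1+L_g+aL+ν̄(2+L_g)^δ) + (L+2aL)/(2ν_min β) + 2`, for every
`k ∈ K` with `xᵏ ∈ B_{ε₁}(x*)` one has `‖dᵏ‖ ≤ c·dist(xᵏ, X*)`. -/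
theorem stmt_16 {n m : ℕ}
    -- problem data: f(x) = ψ(Ax − b), F = f + φ bounded below, φ convex, ψ C²
    (ψ : EuclideanSpace ℝ (Fin m) → ℝ)
    (A : EuclideanSpace ℝ (Fin n) →L[ℝ] EuclideanSpace ℝ (Fin m))
    (b : EuclideanSpace ℝ (Fin m))
    (φ : EuclideanSpace ℝ (Fin n) → ℝ)
    (hψ : ContDiff ℝ 2 ψ) (hφ : ConvexOn ℝ Set.univ φ)
    (f F : EuclideanSpace ℝ (Fin n) → ℝ)
    (hf : ∀ y, f y = ψ (A y - b)) (hF : ∀ y, F y = f y + φ y)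
    (hFbdd : BddBelow (Set.range F))
    -- algorithm parameters
    (c₁ c₂ σ₁ σ₂ η θ α a νmin ν₀ νbar δ τ pmin κ : ℝ)
    (hc₁ : 0 < c₁) (hc₁' : c₁ < 1) (hc₂ : c₁ < c₂) (hc₂' : c₂ < 1)
    (hσ₁ : 0 < σ₁) (hσ₁' : σ₁ < 1) (hσ₂ : 1 < σ₂)
    (hη : 0 < η) (hη' : η < 1) (hθ : 0 < θ) (hθ' : θ < 1)
    (hα : 0 < α) (hα' : α < 1) (ha : 1 ≤ a)
    (hνmin : 0 < νmin) (hν₀a : νmin ≤ ν₀) (hν₀b : ν₀ ≤ νbar)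
    (hδ0 : 0 < δ) (hδ1 : δ ≤ 1) (hτ : δ ≤ τ)
    (hpmin : 0 < pmin) (hpmin' : pmin < 1 / 2) (hκ : 1 + δ < κ)
    -- iterates and regularization sequences
    (x xhat : ℕ → EuclideanSpace ℝ (Fin n)) (ν rbar μ : ℕ → ℝ)
    (hν0 : ν 0 = ν₀) (hrbar0 : rbar 0 = ‖resid f φ (x 0)‖)
    (hμ : ∀ k, μ k = ν k * rbar k ^ δ)
    -- Λ_k, H_k + μ_k I =: G_k, the models q_k, q̂_k, and the subproblem residual R_k
    (Λ : ℕ → ℝ)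
    (hΛ : ∀ k, Λ k = a * max (-(lambdaMin (fderiv ℝ (gradient ψ) (A (x k) - b)))) 0)
    (G : ℕ → EuclideanSpace ℝ (Fin n) →L[ℝ] EuclideanSpace ℝ (Fin n))
    (hG : ∀ k, G k = fderiv ℝ (gradient f) (x k)
        + Λ k • ((ContinuousLinearMap.adjoint A).comp A)
        + μ k • ContinuousLinearMap.id ℝ (EuclideanSpace ℝ (Fin n)))
    (q qhat : ℕ → EuclideanSpace ℝ (Fin n) → ℝ)
    (hq : ∀ k y, q k y = f (x k) + ⟪gradient f (x k), y - x k⟫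
        + (1 / 2) * ⟪y - x k, (fderiv ℝ (gradient f) (x k)) (y - x k)⟫ + φ y)
    (hqhat : ∀ k y, qhat k y = f (x k) + ⟪gradient f (x k), y - x k⟫
        + (1 / 2) * ⟪y - x k, (G k) (y - x k)⟫ + φ y)
    (R : ℕ → EuclideanSpace ℝ (Fin n) → EuclideanSpace ℝ (Fin n))
    (hR : ∀ k y, R k y = y - proxPt φ (y - gradient f (x k) - (G k) (y - x k)))
    -- the inexactness criteria satisfied by x̂ᵏ
    (hinex1 : ∀ k, ‖R k (xhat k)‖ ≤
        θ * min ‖resid f φ (x k)‖ (‖resid f φ (x k)‖ ^ (1 + τ)))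
    (hinex2 : ∀ k, α * μ k / 2 * ‖xhat k - x k‖ ^ 2 ≤ F (x k) - qhat k (xhat k))
    -- dᵏ, pred_k, ared_k, ρ_k
    (d : ℕ → EuclideanSpace ℝ (Fin n)) (hd : ∀ k, d k = xhat k - x k)
    (pred ared ρ : ℕ → ℝ)
    (hpred : ∀ k, pred k = F (x k) - q k (xhat k))
    (hared : ∀ k, ared k = F (x k) - F (xhat k))
    (hρ : ∀ k, ρ k = ared k / pred k)
    -- update rules (unsuccessful / successful / highly successful iterations)
    (unsucc : ℕ → Prop)
    (hunsucc : ∀ k, unsucc k ↔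
        pred k ≤ pmin * (1 - θ) * ‖d k‖ *
          min ‖resid f φ (x k)‖ (‖resid f φ (x k)‖ ^ κ) ∨ ρ k ≤ c₁)
    (hupd : ∀ k,
        (unsucc k → x (k + 1) = x k ∧ ν (k + 1) = σ₂ * ν k) ∧
        (¬unsucc k → x (k + 1) = xhat k ∧
          (ρ k ≤ c₂ → ν (k + 1) = min (ν k) νbar) ∧
          (c₂ < ρ k → ν (k + 1) = min (max (σ₁ * ν k) νmin) νbar)))
    (hrbarupd : ∀ k,
        (‖resid f φ (x (k + 1))‖ ≤ η * rbar k → rbar (k + 1) = ‖resid f φ (x (k + 1))‖) ∧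
        (¬‖resid f φ (x (k + 1))‖ ≤ η * rbar k → rbar (k + 1) = rbar k))
    -- no iterate is stationary (otherwise the algorithm terminates)
    (hrne : ∀ k, resid f φ (x k) ≠ 0)
    -- the index set K
    (K : Set ℕ)
    (hK : K = {0} ∪ {k | 1 ≤ k ∧ ‖resid f φ (x k)‖ ≤ η * rbar (k - 1)})
    -- local assumptions: X* = set of strongly stationary points, x* an accumulation
    -- point of {xᵏ}_{k∈K} lying in X*
    (Xstar : Set (EuclideanSpace ℝ (Fin n)))
    (hXstar : Xstar = {y | -gradient f y ∈ subdiff φ y ∧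
        ∀ u, 0 ≤ ⟪(fderiv ℝ (gradient ψ) (A y - b)) u, u⟫})
    (hXne : Xstar.Nonempty)
    (xstar : EuclideanSpace ℝ (Fin n)) (hxstar : xstar ∈ Xstar)
    (hacc : MapClusterPt xstar (atTop ⊓ 𝓟 K) x)
    -- local Lipschitz continuity of ∇²ψ near x*
    (ε Lψ : ℝ) (hε : 0 < ε) (hLψ : 0 < Lψ)
    (hlipψ : ∀ u ∈ closedBall xstar ε, ∀ v ∈ closedBall xstar ε,
      ‖fderiv ℝ (gradient ψ) (A u - b) - fderiv ℝ (gradient ψ) (A v - b)‖ ≤ Lψ * ‖A u - A v‖)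
    -- Hölderian local error bound of order qq on X*
    (β qq : ℝ) (hβ : 0 < β) (hqq : max δ (1 - δ) < qq)
    (herrbd : ∀ y ∈ closedBall xstar ε, β * infDist y Xstar ≤ ‖resid f φ y‖ ^ qq)
    -- derived constants: ε₀, L = ‖A‖³Lψ, and a Lipschitz constant L_g of ∇f on B_{ε₀}(x*)
    (ε₀ L Lg : ℝ) (hε₀ : ε₀ = min ε (ε / ‖A‖)) (hL : L = ‖A‖ ^ 3 * Lψ) (hLg : 0 < Lg)
    (hlipg : ∀ u ∈ closedBall xstar ε₀, ∀ v ∈ closedBall xstar ε₀,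
      ‖gradient f u - gradient f v‖ ≤ Lg * ‖u - v‖)
    (ε₁ c : ℝ)
    (hε₁ : ε₁ = min (1 / (2 + Lg)) (ε₀ / 2))
    (hc : c = νmin⁻¹ * θ * (2 + Lg) ^ (1 + τ - δ) * (1 + Lg + a * L + νbar * (2 + Lg) ^ δ)
        + (L + 2 * a * L) / (2 * νmin * β) + 2) :
    ∀ k ∈ K, x k ∈ closedBall xstar ε₁ → ‖d k‖ ≤ c * infDist (x k) Xstar :=
  stmt_16_general ψ A b φ hψ hφ f hf c₂ σ₁ σ₂ η θ a νmin ν₀ νbar δ τ hσ₂ hθ ha hνmin hν₀a hν₀b hδ0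
    hτ x xhat ν rbar μ hν0 hrbar0 hμ Λ hΛ G hG R hR hinex1 d hd ρ unsucc hupd hrbarupd hrne K hK
    Xstar hXstar xstar hxstar ε Lψ hLψ hlipψ β qq hβ hqq herrbd ε₀ L Lg hε₀ hL hLg hlipg ε₁ c hε₁ hc
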